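/- Let μ be a Borel probability measure on ℝ^p with M_d(μ) positive definite. The convex optimization problem: minimize (1/2) Σ_{|α|≤d} ∫ Q_α(x)² dμ(x) over polynomials Q_α of degree ≤ d and reals θ_α, subject to (i) the coefficient q_{αβ} of x^β in Q_α vanishes whenever α <_gl β, (ii) q_{αα} ≥ exp(θ_α), and (iii) Σ_α θ_α = 0, has a unique optimal solution, given by Q*_α = √λ · P_α and θ*_α = log(√λ · c_α), where {P_α} are the orthonormal polynomials with leading coefficients c_α > 0 and λ = (∏_α c_α)^{−2/s(d)}. Consequently Σ_α (Q*_α)² = λ · Q_{μ,d}. -/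

import Mathlib

/-!
The coefficient vectors of the orthonormal polynomials form a matrix `L`, lower triangular for
`<_gl` with diagonal `c_α > 0`, and orthonormality says `L M Lᵀ = 1`; hence `M⁻¹ = Lᵀ L`, which is
the SOS identity. A feasible `Q_α` expands in the orthonormal basis with coefficients `r_β` that
vanish for `β >_gl α` and with `r_α = q_αα / c_α`, so
`∫ Q_α² = ∑ r_β² ≥ (q_αα / c_α)² ≥ exp (2 (θ_α - log c_α))`. When `∑ θ_α = 0` these exponents sum
to `s log λ`, and the tangent-line bound `exp t ≥ λ (1 + t - log λ)` gives `∑ ∫ Q_α² ≥ s λ`, with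
equality only if every exponent equals `log λ` and every `Q_α` is a multiple of `P_α`.
-/

open MeasureTheory Finset Matrix

/-- Multi-indices in `p` variables of total degree at most `d`. -/
abbrev MIdx (p d : ℕ) := {α : Fin p → Fin (d + 1) // ∑ i, (α i : ℕ) ≤ d}

/-- The monomial `x ^ α`. -/
noncomputable def mon {p d : ℕ} (α : MIdx p d) (x : Fin p → ℝ) : ℝ :=
  ∏ i, x i ^ (α.1 i : ℕ)

/-- The moment matrix `M_d(μ)`, with entries `∫ x^(α+β) dμ`. -/
noncomputable def momMat {p : ℕ} (d : ℕ) (μ : Measure (Fin p → ℝ)) :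
    Matrix (MIdx p d) (MIdx p d) ℝ :=
  fun α β => ∫ x, mon α x * mon β x ∂μ

/-- Evaluation of the polynomial with coefficient vector `c` at `x`. -/
noncomputable def peval {p d : ℕ} (c : MIdx p d → ℝ) (x : Fin p → ℝ) : ℝ :=
  ∑ α, c α * mon α x

/-- The vector of monomials `v_d(x)`. -/
noncomputable def vvec {p : ℕ} (d : ℕ) (x : Fin p → ℝ) : MIdx p d → ℝ :=
  fun α => mon α x

/-- Graded lexicographic (strict) order: `glex α β` means `α <_gl β`. -/
def glex {p d : ℕ} (α β : MIdx p d) : Prop :=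
  (∑ i, (α.1 i : ℕ)) < (∑ i, (β.1 i : ℕ)) ∨
    ((∑ i, (α.1 i : ℕ)) = (∑ i, (β.1 i : ℕ)) ∧
      ∃ i, (∀ j, j < i → α.1 j = β.1 j) ∧ (β.1 i : ℕ) < (α.1 i : ℕ))

section Glex
variable {p d : ℕ}

def glexKey (α : MIdx p d) : ℕ ×ₗ (Lex (Fin p → Fin (d + 1)))ᵒᵈ :=
  toLex (∑ i, (α.1 i : ℕ), OrderDual.toDual (toLex α.1))

lemma glex_iff_glexKey_lt {α β : MIdx p d} : glex α β ↔ glexKey α < glexKey β := by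
  rw [glexKey, glexKey, Prod.Lex.toLex_lt_toLex, OrderDual.toDual_lt_toDual]
  exact or_congr_right <| and_congr_right fun _ =>
    exists_congr fun _ => and_congr_left' <| forall₂_congr fun _ _ => eq_comm

lemma glexKey_injective : Function.Injective (glexKey (p := p) (d := d)) := by
  intro α β h
  simp only [glexKey, toLex_inj, Prod.mk.injEq] at h
  exact Subtype.ext h.2

instance : IsTrans (MIdx p d) glex :=
  ⟨fun _ _ _ => by simp only [glex_iff_glexKey_lt]; exact lt_trans⟩

instance : Std.Trichotomous (glex : MIdx p d → MIdx p d → Prop) :=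
  ⟨fun α β hαβ hβα => glexKey_injective <| by
    rw [glex_iff_glexKey_lt, not_lt] at hαβ hβα; exact le_antisymm hβα hαβ⟩

end Glex

namespace MIdx

def homogenizeEquiv (p d : ℕ) : MIdx p d ≃ {f : Fin (p + 1) → ℕ // ∑ i, f i = d} where
  toFun α := ⟨Fin.snoc (fun i => (α.1 i : ℕ)) (d - ∑ i, (α.1 i : ℕ)), by
    rw [Fin.sum_snoc]; exact Nat.add_sub_cancel' α.2⟩
  invFun f := ⟨fun i => ⟨f.1 i.castSucc, by
      have := (Fin.sum_univ_castSucc f.1).symm.trans f.2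
      have := single_le_sum (fun j _ => Nat.zero_le (f.1 (Fin.castSucc j))) (mem_univ i)
      omega⟩, by
    have := (Fin.sum_univ_castSucc f.1).symm.trans f.2
    simp only
    omega⟩
  left_inv α := by ext i; simp
  right_inv f := by
    ext j
    refine Fin.lastCases ?_ (fun i => by simp) j
    have := (Fin.sum_univ_castSucc f.1).symm.trans f.2
    simp only [Fin.snoc_last]
    omega

lemma card_eq_choose (p d : ℕ) : Fintype.card (MIdx p d) = (p + d).choose d := by
  rw [Fintype.card_congr ((homogenizeEquiv p d).trans (Sym.equivNatSumOfFintype _ d).symm),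
    Sym.card_sym_eq_choose, Fintype.card_fin, Nat.add_right_comm, Nat.add_sub_cancel]

end MIdx

namespace Real

lemma exp_mul_one_add_sub_le (a t : ℝ) : exp a * (1 + (t - a)) ≤ exp t := by
  calc exp a * (1 + (t - a)) ≤ exp a * exp (t - a) := by
        gcongr; linarith [add_one_le_exp (t - a)]
    _ = exp t := by rw [← exp_add, add_sub_cancel]

lemma exp_mul_one_add_sub_lt {a t : ℝ} (h : t ≠ a) : exp a * (1 + (t - a)) < exp t := by
  calc exp a * (1 + (t - a)) < exp a * exp (t - a) := by
        gcongr; linarith [add_one_lt_exp (sub_ne_zero.2 h)]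
    _ = exp t := by rw [← exp_add, add_sub_cancel]

variable {ι : Type*} [Fintype ι] {t : ι → ℝ} {a : ℝ}

lemma sum_exp_mul_one_add_sub (h : ∑ i, t i = Fintype.card ι * a) :
    ∑ i, exp a * (1 + (t i - a)) = Fintype.card ι * exp a := by
  rw [← mul_sum, sum_add_distrib, sum_sub_distrib, h]
  simp only [sum_const, card_univ, nsmul_eq_mul, mul_one]
  ring

lemma card_mul_exp_le_sum_exp (h : ∑ i, t i = Fintype.card ι * a) :
    Fintype.card ι * exp a ≤ ∑ i, exp (t i) :=
  sum_exp_mul_one_add_sub h ▸ sum_le_sum fun i _ => exp_mul_one_add_sub_le a (t i)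

lemma sum_exp_eq_card_mul_exp_iff (h : ∑ i, t i = Fintype.card ι * a) :
    ∑ i, exp (t i) = Fintype.card ι * exp a ↔ ∀ i, t i = a := by
  rw [← sum_exp_mul_one_add_sub h, eq_comm,
    sum_eq_sum_iff_of_le fun i _ => exp_mul_one_add_sub_le a (t i)]
  refine ⟨fun heq i => ?_, fun heq i _ => by rw [heq i, sub_self, add_zero, mul_one]⟩
  by_contra hne
  exact (exp_mul_one_add_sub_lt hne).ne (heq i (mem_univ i))

lemma exp_two_mul_sub_log {x : ℝ} (hx : 0 < x) (θ : ℝ) :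
    exp (2 * (θ - log x)) = (exp θ / x) ^ 2 := by
  rw [two_mul, exp_add, exp_sub, exp_log hx, sq]

end Real

namespace Matrix

variable {ι : Type*} [Fintype ι] {L M : Matrix ι ι ℝ} {r : ι → ι → Prop}

lemma mul_mul_transpose_apply_eq_zero [IsTrans ι r] [Std.Trichotomous r]
    (hL : ∀ α β, r α β → L α β = 0) (hLM : ∀ α β, r β α → (L * M) α β = 0) {α β : ι}
    (hβα : r β α) : (L * M * Lᵀ) α β = 0 := by
  rw [mul_apply]
  refine sum_eq_zero fun γ _ => ?_
  by_cases hγα : r γ α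
  · rw [hLM α γ hγα, zero_mul]
  · rw [transpose_apply, hL β γ (trans_trichotomous_right hβα hγα), mul_zero]

lemma mul_mulVec_apply_eq_zero [IsTrans ι r] [Std.Trichotomous r]
    (hLM : ∀ α β, r β α → (L * M) α β = 0) {c : ι → ℝ} {α β : ι}
    (hc : ∀ γ, r α γ → c γ = 0) (hαβ : r α β) : ((L * M) *ᵥ c) β = 0 := by
  rw [mulVec_apply_eq_sum]
  refine sum_eq_zero fun γ _ => ?_
  by_cases hαγ : r α γ
  · rw [hc γ hαγ, mul_zero]
  · rw [hLM β γ (trans_trichotomous_left hαγ hαβ), zero_mul]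

variable [DecidableEq ι]

lemma mul_mul_transpose_eq_one [IsTrans ι r] [Std.Trichotomous r] (hM : Mᵀ = M)
    (hL : ∀ α β, r α β → L α β = 0) (hLM : ∀ α β, r β α → (L * M) α β = 0)
    (hdiag : ∀ α, (L * M * Lᵀ) α α = 1) : L * M * Lᵀ = 1 := by
  have hsymm : (L * M * Lᵀ)ᵀ = L * M * Lᵀ := by
    rw [transpose_mul, transpose_mul, transpose_transpose, hM, Matrix.mul_assoc]
  ext α β
  rcases eq_or_ne α β with rfl | hne
  · rw [hdiag, one_apply_eq]
  rw [one_apply_ne hne]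
  rcases trichotomous_of r α β with h | rfl | h
  · rw [← hsymm, transpose_apply, mul_mul_transpose_apply_eq_zero hL hLM h]
  · exact absurd rfl hne
  · exact mul_mul_transpose_apply_eq_zero hL hLM h

lemma dotProduct_transpose_mulVec_mulVec (h : L * M * Lᵀ = 1) (v : ι → ℝ) :
    (Lᵀ *ᵥ v) ⬝ᵥ M *ᵥ (Lᵀ *ᵥ v) = v ⬝ᵥ v := by
  rw [mulVec_mulVec, mulVec_transpose, dotProduct_mulVec, vecMul_vecMul, ← Matrix.mul_assoc, h,
    vecMul_one]

lemma transpose_mulVec_mul_mulVec (h : L * M * Lᵀ = 1) (c : ι → ℝ) :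
    Lᵀ *ᵥ ((L * M) *ᵥ c) = c := by
  rw [mulVec_mulVec, mul_eq_one_comm.mp h, one_mulVec]

lemma dotProduct_mulVec_eq_sum_sq (h : L * M * Lᵀ = 1) (c : ι → ℝ) :
    c ⬝ᵥ M *ᵥ c = ∑ β, ((L * M) *ᵥ c) β ^ 2 := by
  conv_lhs => rw [← transpose_mulVec_mul_mulVec h c, dotProduct_transpose_mulVec_mulVec h]
  simp only [dotProduct, sq]

lemma inv_eq_transpose_mul (h : L * M * Lᵀ = 1) : M⁻¹ = Lᵀ * L :=
  inv_eq_left_inv <| by rw [Matrix.mul_assoc, mul_eq_one_comm.mp h]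

lemma sum_dotProduct_smul_mulVec_smul (h : L * M * Lᵀ = 1) (k : ℝ) :
    ∑ α, (k • L α) ⬝ᵥ M *ᵥ (k • L α) = Fintype.card ι * k ^ 2 := by
  have hrow : ∀ α, L α ⬝ᵥ M *ᵥ L α = 1 := fun α => by
    rw [← transpose_transpose L, ← mul_mul_apply, transpose_transpose, h, one_apply_eq]
  simp only [mulVec_smul, dotProduct_smul, smul_dotProduct, hrow, smul_eq_mul,
    mul_one, sum_const, card_univ, nsmul_eq_mul, sq]

lemma sq_mul_mulVec_apply_le (h : L * M * Lᵀ = 1) (c : ι → ℝ) (α : ι) :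
    ((L * M) *ᵥ c) α ^ 2 ≤ c ⬝ᵥ M *ᵥ c := by
  rw [dotProduct_mulVec_eq_sum_sq h]
  exact single_le_sum (fun β _ => sq_nonneg _) (mem_univ α)

lemma eq_smul_row_of_dotProduct_mulVec_eq (h : L * M * Lᵀ = 1) {c : ι → ℝ} {α : ι}
    (hc : c ⬝ᵥ M *ᵥ c = ((L * M) *ᵥ c) α ^ 2) : c = ((L * M) *ᵥ c) α • L α := by
  set v := (L * M) *ᵥ c
  have hv : v = Pi.single α (v α) := by
    rw [dotProduct_mulVec_eq_sum_sq h, ← add_sum_erase _ _ (mem_univ α), add_eq_left,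
      sum_eq_zero_iff_of_nonneg fun β _ => sq_nonneg _] at hc
    funext β
    rcases eq_or_ne β α with rfl | hβ
    · simp
    · simpa [hβ] using hc β (mem_erase.2 ⟨hβ, mem_univ β⟩)
  calc c = Lᵀ *ᵥ v := (transpose_mulVec_mul_mulVec h c).symm
    _ = Lᵀ *ᵥ Pi.single α (v α) := congrArg _ hv
    _ = v α • L α := by ext β; simp [mul_comm]

lemma apply_eq_mul_mulVec_apply_mul [IsTrans ι r] [Std.Trichotomous r] (h : L * M * Lᵀ = 1)
    (hL : ∀ α β, r α β → L α β = 0) (hLM : ∀ α β, r β α → (L * M) α β = 0) {c : ι → ℝ}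
    {α : ι} (hc : ∀ γ, r α γ → c γ = 0) : c α = ((L * M) *ᵥ c) α * L α α := by
  conv_lhs => rw [← transpose_mulVec_mul_mulVec h c]
  rw [mulVec_apply_eq_sum, sum_eq_single α]
  · rw [transpose_apply, mul_comm]
  · intro β _ hβα
    rcases trichotomous_of r β α with h' | rfl | h'
    · rw [transpose_apply, hL β α h', zero_mul]
    · exact absurd rfl hβα
    · rw [mul_mulVec_apply_eq_zero hLM hc h', mul_zero]
  · simp

end Matrix

section Optimization

open Real

variable {ι : Type*} [Fintype ι] {r : ι → ι → Prop}

def IsFeasible (r : ι → ι → Prop) (Q : Matrix ι ι ℝ) (θ : ι → ℝ) : Prop :=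
  (∀ α β, r α β → Q α β = 0) ∧ (∀ α, exp (θ α) ≤ Q α α) ∧ ∑ α, θ α = 0

/-- For a triangular `L` with `L * M * Lᵀ = 1` this is `det M ^ (1 / card ι)`. -/
noncomputable def diagScale (L : Matrix ι ι ℝ) : ℝ :=
  (∏ α, L α α) ^ (-2 / (Fintype.card ι : ℝ))

variable {L M : Matrix ι ι ℝ}

lemma diagScale_pos (hpos : ∀ α, 0 < L α α) : 0 < diagScale L :=
  rpow_pos_of_pos (prod_pos fun α _ => hpos α) _

lemma card_mul_log_diagScale (hpos : ∀ α, 0 < L α α) :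
    Fintype.card ι * log (diagScale L) = -2 * ∑ α, log (L α α) := by
  rw [diagScale, log_rpow (prod_pos fun α _ => hpos α), log_prod fun α _ => (hpos α).ne']
  rcases isEmpty_or_nonempty ι with hι | hι
  · simp
  · field_simp

lemma log_sqrt_diagScale_mul (hpos : ∀ α, 0 < L α α) (α : ι) :
    log (√(diagScale L) * L α α) = log (diagScale L) / 2 + log (L α α) := by
  rw [log_mul (sqrt_pos.2 (diagScale_pos hpos)).ne' (hpos α).ne',
    log_sqrt (diagScale_pos hpos).le]

lemma isFeasible_sqrt_diagScale_smul (hL : ∀ α β, r α β → L α β = 0) (hpos : ∀ α, 0 < L α α) :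
    IsFeasible r (√(diagScale L) • L) fun α => log (√(diagScale L) * L α α) := by
  refine ⟨fun α β h => by simp [hL α β h], fun α => ?_, ?_⟩
  · rw [exp_log (mul_pos (sqrt_pos.2 (diagScale_pos hpos)) (hpos α))]
    rfl
  · simp only [log_sqrt_diagScale_mul hpos, sum_add_distrib, sum_const, card_univ, nsmul_eq_mul]
    linarith [card_mul_log_diagScale hpos]

variable [DecidableEq ι]

/-- The rows of `L` are the coefficient vectors of an orthonormal basis for the inner product `M`,
triangular with respect to `r`. -/
structure IsInvCholeskyFactor (r : ι → ι → Prop) (L M : Matrix ι ι ℝ) : Prop where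
  mul_mul_transpose : L * M * Lᵀ = 1
  lower : ∀ α β, r α β → L α β = 0
  mul_upper : ∀ α β, r β α → (L * M) α β = 0
  diag_pos : ∀ α, 0 < L α α

variable {Q : Matrix ι ι ℝ} {θ : ι → ℝ}

namespace IsInvCholeskyFactor

lemma sum_two_mul_sub_log (hF : IsInvCholeskyFactor r L M) (hθ : ∑ α, θ α = 0) :
    ∑ α, 2 * (θ α - log (L α α)) = Fintype.card ι * log (diagScale L) := by
  rw [card_mul_log_diagScale hF.diag_pos, ← mul_sum, sum_sub_distrib, hθ, zero_sub, mul_neg,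
    neg_mul]

variable [IsTrans ι r] [Std.Trichotomous r]

lemma div_le_mul_mulVec_apply (hF : IsInvCholeskyFactor r L M) {c : ι → ℝ} {α : ι} {θ : ℝ}
    (hc : ∀ γ, r α γ → c γ = 0) (hθ : exp θ ≤ c α) :
    exp θ / L α α ≤ ((L * M) *ᵥ c) α := by
  rw [div_le_iff₀ (hF.diag_pos α),
    ← Matrix.apply_eq_mul_mulVec_apply_mul hF.mul_mul_transpose hF.lower hF.mul_upper hc]
  exact hθ

lemma exp_two_mul_sub_log_le (hF : IsInvCholeskyFactor r L M) {c : ι → ℝ} {α : ι} {θ : ℝ}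
    (hc : ∀ γ, r α γ → c γ = 0) (hθ : exp θ ≤ c α) :
    exp (2 * (θ - log (L α α))) ≤ c ⬝ᵥ M *ᵥ c := by
  rw [exp_two_mul_sub_log (hF.diag_pos α)]
  calc (exp θ / L α α) ^ 2 ≤ ((L * M) *ᵥ c) α ^ 2 := by
        gcongr
        · exact (div_pos (exp_pos θ) (hF.diag_pos α)).le
        · exact hF.div_le_mul_mulVec_apply hc hθ
    _ ≤ c ⬝ᵥ M *ᵥ c := Matrix.sq_mul_mulVec_apply_le hF.mul_mul_transpose c α

lemma eq_smul_row_of_dotProduct_mulVec_eq_exp (hF : IsInvCholeskyFactor r L M) {c : ι → ℝ} {α : ι}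
    {θ : ℝ} (hc : ∀ γ, r α γ → c γ = 0) (hθ : exp θ ≤ c α)
    (heq : c ⬝ᵥ M *ᵥ c = exp (2 * (θ - log (L α α)))) : c = (exp θ / L α α) • L α := by
  have hlow := hF.div_le_mul_mulVec_apply hc hθ
  have hnonneg : 0 ≤ exp θ / L α α := (div_pos (exp_pos θ) (hF.diag_pos α)).le
  have hsq := Matrix.sq_mul_mulVec_apply_le hF.mul_mul_transpose c α
  rw [heq, exp_two_mul_sub_log (hF.diag_pos α)] at hsq
  have hv : ((L * M) *ᵥ c) α = exp θ / L α α :=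
    le_antisymm ((pow_le_pow_iff_left₀ (hnonneg.trans hlow) hnonneg two_ne_zero).1 hsq) hlow
  rw [← hv]
  refine Matrix.eq_smul_row_of_dotProduct_mulVec_eq hF.mul_mul_transpose ?_
  rw [heq, hv, exp_two_mul_sub_log (hF.diag_pos α)]

theorem card_mul_diagScale_le (hF : IsInvCholeskyFactor r L M) (hQ : IsFeasible r Q θ) :
    Fintype.card ι * diagScale L ≤ ∑ α, Q α ⬝ᵥ M *ᵥ Q α := by
  obtain ⟨hQL, hQd, hθ⟩ := hQ
  calc Fintype.card ι * diagScale L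
      = Fintype.card ι * exp (log (diagScale L)) := by rw [exp_log (diagScale_pos hF.diag_pos)]
    _ ≤ ∑ α, exp (2 * (θ α - log (L α α))) := card_mul_exp_le_sum_exp (hF.sum_two_mul_sub_log hθ)
    _ ≤ ∑ α, Q α ⬝ᵥ M *ᵥ Q α := sum_le_sum fun α _ => hF.exp_two_mul_sub_log_le (hQL α) (hQd α)

theorem eq_of_sum_dotProduct_mulVec_eq (hF : IsInvCholeskyFactor r L M) (hQ : IsFeasible r Q θ)
    (heq : ∑ α, Q α ⬝ᵥ M *ᵥ Q α = Fintype.card ι * diagScale L) :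
    Q = √(diagScale L) • L ∧ θ = fun α => log (√(diagScale L) * L α α) := by
  obtain ⟨hQL, hQd, hθ⟩ := hQ
  have hexp := exp_log (diagScale_pos hF.diag_pos)
  have ht := hF.sum_two_mul_sub_log hθ
  have hle : ∀ α, exp (2 * (θ α - log (L α α))) ≤ Q α ⬝ᵥ M *ᵥ Q α :=
    fun α => hF.exp_two_mul_sub_log_le (hQL α) (hQd α)
  have hsum : ∑ α, exp (2 * (θ α - log (L α α))) = Fintype.card ι * exp (log (diagScale L)) :=
    le_antisymm (by rw [hexp, ← heq]; exact sum_le_sum fun α _ => hle α)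
      (card_mul_exp_le_sum_exp ht)
  have hrow : ∀ α, Q α ⬝ᵥ M *ᵥ Q α = exp (2 * (θ α - log (L α α))) := fun α =>
    ((sum_eq_sum_iff_of_le fun α _ => hle α).1 (by rw [hsum, heq, hexp]) α (mem_univ α)).symm
  have hθα : ∀ α, θ α = log (√(diagScale L) * L α α) := fun α => by
    rw [log_sqrt_diagScale_mul hF.diag_pos]
    linarith [(sum_exp_eq_card_mul_exp_iff ht).1 hsum α]
  refine ⟨funext fun α => ?_, funext hθα⟩
  rw [hF.eq_smul_row_of_dotProduct_mulVec_eq_exp (hQL α) (hQd α) (hrow α), hθα,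
    exp_log (mul_pos (sqrt_pos.2 (diagScale_pos hF.diag_pos)) (hF.diag_pos α)),
    mul_div_cancel_right₀ _ (hF.diag_pos α).ne']
  rfl

end IsInvCholeskyFactor

end Optimization

section Moments

variable {p d : ℕ} {μ : Measure (Fin p → ℝ)}

lemma integrable_mon_mul_mon (hmom : ∀ α : Fin p → ℕ, Integrable (fun x => ∏ i, x i ^ α i) μ)
    (γ δ : MIdx p d) : Integrable (fun x => mon γ x * mon δ x) μ := by
  refine (hmom fun i => (γ.1 i : ℕ) + (δ.1 i : ℕ)).congr (ae_of_all _ fun x => ?_)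
  simp only [mon, ← prod_mul_distrib, pow_add]

lemma integral_peval_mul_peval
    (hmom : ∀ α : Fin p → ℕ, Integrable (fun x => ∏ i, x i ^ α i) μ) (c c' : MIdx p d → ℝ) :
    ∫ x, peval c x * peval c' x ∂μ = c ⬝ᵥ momMat d μ *ᵥ c' := by
  have hint : ∀ γ δ, Integrable (fun x => c γ * c' δ * (mon γ x * mon δ x)) μ := fun γ δ =>
    (integrable_mon_mul_mon hmom γ δ).const_mul _
  calc ∫ x, peval c x * peval c' x ∂μ
      = ∫ x, ∑ γ, ∑ δ, c γ * c' δ * (mon γ x * mon δ x) ∂μ := by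
        simp only [peval, sum_mul_sum]
        congr 1; ext x
        exact sum_congr rfl fun γ _ => sum_congr rfl fun δ _ => by ring
    _ = ∑ γ, ∑ δ, c γ * c' δ * momMat d μ γ δ := by
        rw [integral_finsetSum _ fun γ _ => integrable_finsetSum _ fun δ _ => hint γ δ]
        refine sum_congr rfl fun γ _ => ?_
        rw [integral_finsetSum _ fun δ _ => hint γ δ]
        exact sum_congr rfl fun δ _ => integral_const_mul _ _
    _ = c ⬝ᵥ momMat d μ *ᵥ c' := by
        simp only [dotProduct, mulVec, mul_sum]
        exact sum_congr rfl fun γ _ => sum_congr rfl fun δ _ => by ring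

lemma integral_peval_sq (hmom : ∀ α : Fin p → ℕ, Integrable (fun x => ∏ i, x i ^ α i) μ)
    (c : MIdx p d → ℝ) : ∫ x, peval c x ^ 2 ∂μ = c ⬝ᵥ momMat d μ *ᵥ c := by
  simp only [sq, integral_peval_mul_peval hmom]

lemma momMat_transpose : (momMat d μ)ᵀ = momMat d μ := by
  ext α β
  simp only [transpose_apply, momMat, mul_comm]

lemma peval_single_one (β : MIdx p d) : peval (Pi.single β 1) = mon β := by
  ext x
  simp [peval, Pi.single_apply]

lemma mul_momMat_apply (hmom : ∀ α : Fin p → ℕ, Integrable (fun x => ∏ i, x i ^ α i) μ)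
    (L : Matrix (MIdx p d) (MIdx p d) ℝ) (α β : MIdx p d) :
    (L * momMat d μ) α β = ∫ x, mon β x * peval (L α) x ∂μ := by
  simp_rw [← peval_single_one β, mul_comm (peval (Pi.single β 1) _),
    integral_peval_mul_peval hmom, mulVec_single_one]
  rfl

lemma peval_smul (k : ℝ) (c : MIdx p d → ℝ) (x : Fin p → ℝ) :
    peval (k • c) x = k * peval c x := by
  simp only [peval, Pi.smul_apply, smul_eq_mul, mul_sum, mul_assoc]

lemma vvec_dotProduct_inv_momMat_mulVec {L : Matrix (MIdx p d) (MIdx p d) ℝ}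
    (h : L * momMat d μ * Lᵀ = 1) (x : Fin p → ℝ) :
    vvec d x ⬝ᵥ (momMat d μ)⁻¹ *ᵥ vvec d x = ∑ α, peval (L α) x ^ 2 := by
  rw [Matrix.inv_eq_transpose_mul h, ← mulVec_mulVec, dotProduct_mulVec, vecMul_transpose]
  simp only [dotProduct, mulVec, peval, vvec, sq]

lemma isInvCholeskyFactor_of_orthonormal
    (hmom : ∀ α : Fin p → ℕ, Integrable (fun x => ∏ i, x i ^ α i) μ)
    {Pc : Matrix (MIdx p d) (MIdx p d) ℝ} (hcoef : ∀ α β, glex α β → Pc α β = 0)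
    (hlead : ∀ α, 0 < Pc α α)
    (horth : ∀ α β, glex β α → ∫ x, mon β x * peval (Pc α) x ∂μ = 0)
    (hnorm : ∀ α, ∫ x, (peval (Pc α) x) ^ 2 ∂μ = 1) :
    IsInvCholeskyFactor glex Pc (momMat d μ) := by
  have hLM : ∀ α β, glex β α → (Pc * momMat d μ) α β = 0 := fun α β h =>
    (mul_momMat_apply hmom Pc α β).trans (horth α β h)
  refine ⟨Matrix.mul_mul_transpose_eq_one momMat_transpose hcoef hLM fun α => ?_, hcoef, hLM,
    hlead⟩
  rw [Matrix.mul_mul_apply, transpose_transpose, ← integral_peval_sq hmom, hnorm]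

end Moments

theorem variational_characterization_inverse_moment_sos_general {p d : ℕ}
    (μ : Measure (Fin p → ℝ))
    (hmom : ∀ α : Fin p → ℕ, Integrable (fun x => ∏ i, x i ^ α i) μ)
    (Pc : MIdx p d → MIdx p d → ℝ)
    (hcoef : ∀ α β : MIdx p d, glex α β → Pc α β = 0)
    (hlead : ∀ α : MIdx p d, 0 < Pc α α)
    (horth : ∀ α β : MIdx p d, glex β α → ∫ x, mon β x * peval (Pc α) x ∂μ = 0)
    (hnorm : ∀ α : MIdx p d, ∫ x, (peval (Pc α) x) ^ 2 ∂μ = 1)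
    (lam : ℝ) (hlam : lam = (∏ α : MIdx p d, Pc α α) ^ (-2 / ((p + d).choose d : ℝ)))
    (Qstar : MIdx p d → MIdx p d → ℝ)
    (hQstar : Qstar = fun α β => Real.sqrt lam * Pc α β)
    (θstar : MIdx p d → ℝ)
    (hθstar : θstar = fun α => Real.log (Real.sqrt lam * Pc α α))
    (Feasible : (MIdx p d → MIdx p d → ℝ) → (MIdx p d → ℝ) → Prop)
    (hFeas : Feasible = fun Q θ =>
      (∀ α β : MIdx p d, glex α β → Q α β = 0) ∧
        (∀ α : MIdx p d, Real.exp (θ α) ≤ Q α α) ∧ ∑ α : MIdx p d, θ α = 0)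
    (obj : (MIdx p d → MIdx p d → ℝ) → ℝ)
    (hobj : obj = fun Q => (1 / 2) * ∑ α : MIdx p d, ∫ x, (peval (Q α) x) ^ 2 ∂μ) :
    Feasible Qstar θstar ∧
      (∀ Q θ, Feasible Q θ → obj Qstar ≤ obj Q) ∧
      (∀ Q θ, Feasible Q θ → obj Q = obj Qstar → Q = Qstar ∧ θ = θstar) ∧
      ∀ x : Fin p → ℝ,
        ∑ α : MIdx p d, (peval (Qstar α) x) ^ 2 =
          lam * (vvec d x ⬝ᵥ (momMat d μ)⁻¹ *ᵥ vvec d x) := by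
  have hF := isInvCholeskyFactor_of_orthonormal hmom hcoef hlead horth hnorm
  obtain rfl : lam = diagScale Pc := by rw [hlam, ← MIdx.card_eq_choose]; rfl
  obtain rfl : Qstar = √(diagScale Pc) • Pc := hQstar
  have hobjQ : ∀ Q, obj Q = (∑ α, Q α ⬝ᵥ momMat d μ *ᵥ Q α) / 2 := fun Q => by
    rw [hobj]
    simp only [integral_peval_sq hmom]
    ring
  have hobjstar : obj (√(diagScale Pc) • Pc) = Fintype.card (MIdx p d) * diagScale Pc / 2 := by
    simp only [hobjQ, Pi.smul_apply, Matrix.sum_dotProduct_smul_mulVec_smul hF.mul_mul_transpose,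
      Real.sq_sqrt (diagScale_pos hlead).le]
  subst hθstar hFeas
  refine ⟨isFeasible_sqrt_diagScale_smul hcoef hlead, fun Q θ hQ => ?_,
    fun Q θ hQ heq => hF.eq_of_sum_dotProduct_mulVec_eq hQ ?_, fun x => ?_⟩
  · rw [hobjstar, hobjQ]
    linarith [hF.card_mul_diagScale_le hQ]
  · rw [hobjstar, hobjQ] at heq
    linarith
  · simp only [Pi.smul_apply, peval_smul, mul_pow, Real.sq_sqrt (diagScale_pos hlead).le,
      ← mul_sum, vvec_dotProduct_inv_momMat_mulVec hF.mul_mul_transpose]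

/-- the convex optimization problem over families of polynomials
has the unique optimal solution `Q*_α = √λ P_α`, `θ*_α = log(√λ c_α)`, and the
resulting SOS polynomial is `λ Q_{μ,d}`. -/
theorem variational_characterization_inverse_moment_sos {p d : ℕ}
    (μ : Measure (Fin p → ℝ)) [IsProbabilityMeasure μ]
    (hmom : ∀ α : Fin p → ℕ, Integrable (fun x => ∏ i, x i ^ α i) μ)
    (hpd : (momMat d μ).PosDef)
    (Pc : MIdx p d → MIdx p d → ℝ)
    (hcoef : ∀ α β : MIdx p d, glex α β → Pc α β = 0)
    (hlead : ∀ α : MIdx p d, 0 < Pc α α)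
    (horth : ∀ α β : MIdx p d, glex β α → ∫ x, mon β x * peval (Pc α) x ∂μ = 0)
    (hnorm : ∀ α : MIdx p d, ∫ x, (peval (Pc α) x) ^ 2 ∂μ = 1)
    (lam : ℝ) (hlam : lam = (∏ α : MIdx p d, Pc α α) ^ (-2 / ((p + d).choose d : ℝ)))
    (Qstar : MIdx p d → MIdx p d → ℝ)
    (hQstar : Qstar = fun α β => Real.sqrt lam * Pc α β)
    (θstar : MIdx p d → ℝ)
    (hθstar : θstar = fun α => Real.log (Real.sqrt lam * Pc α α))
    (Feasible : (MIdx p d → MIdx p d → ℝ) → (MIdx p d → ℝ) → Prop)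
    (hFeas : Feasible = fun Q θ =>
      (∀ α β : MIdx p d, glex α β → Q α β = 0) ∧
        (∀ α : MIdx p d, Real.exp (θ α) ≤ Q α α) ∧ ∑ α : MIdx p d, θ α = 0)
    (obj : (MIdx p d → MIdx p d → ℝ) → ℝ)
    (hobj : obj = fun Q => (1 / 2) * ∑ α : MIdx p d, ∫ x, (peval (Q α) x) ^ 2 ∂μ) :
    Feasible Qstar θstar ∧
      (∀ Q θ, Feasible Q θ → obj Qstar ≤ obj Q) ∧
      (∀ Q θ, Feasible Q θ → obj Q = obj Qstar → Q = Qstar ∧ θ = θstar) ∧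
      ∀ x : Fin p → ℝ,
        ∑ α : MIdx p d, (peval (Qstar α) x) ^ 2 =
          lam * (vvec d x ⬝ᵥ (momMat d μ)⁻¹ *ᵥ vvec d x) :=
  variational_characterization_inverse_moment_sos_general μ hmom Pc hcoef hlead horth hnorm lam hlam
    Qstar hQstar θstar hθstar Feasible hFeas obj hobj
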